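/- For 0 ≤ ℓ < n and κ = n − ℓ: ∑_{i=0}^{ℓ} [n choose i]_q p^i (1−·p)^{n-i} = 1 − [n]_q [n-1 choose ℓ]_q ∫_0^p x^ℓ (1−·qx)^{n-1-ℓ} d_q x, where the q-integral is ∫_0^p f d_q x = (1-q) p ∑_{j=0}^{∞} q^j f(p q^j). -/

import Mathlib

/-- The `q`-analog `[n]_q = 1 + q + ⋯ + q^(n-1)` of a natural number. -/
def qNum {R : Type*} [CommRing R] (q : R) (n : ℕ) : R := ∑ i ∈ Finset.range n, q ^ i

/-- The `q`-factorial `[n]! = [1][2]⋯[n]`. -/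
def qFact {R : Type*} [CommRing R] (q : R) (n : ℕ) : R := ∏ i ∈ Finset.range n, qNum q (i + 1)

/-- The Gaussian (`q`-)binomial coefficient, via the `q`-Pascal recursion. -/
def qBinom {R : Type*} [CommRing R] (q : R) : ℕ → ℕ → R
  | _, 0 => 1
  | 0, _ + 1 => 0
  | n + 1, k + 1 => qBinom q n k + q ^ (k + 1) * qBinom q n (k + 1)

/-- The `q`-shifted product `(1 −· p)^m = ∏_{i=0}^{m-1} (1 - p q^i)`. -/
def qProdSub {R : Type*} [CommRing R] (q p : R) (m : ℕ) : R :=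
  ∏ i ∈ Finset.range m, (1 - p * q ^ i)

/-- The `q`-shifted power `(x +· y)^m = ∏_{i=0}^{m-1} (x + q^i y)`. -/
def qProdAdd {R : Type*} [CommRing R] (q x y : R) (m : ℕ) : R :=
  ∏ i ∈ Finset.range m, (x + q ^ i * y)

lemma qBinom_zero (q : ℝ) (n : ℕ) : qBinom q n 0 = 1 := by cases n <;> rfl
lemma qBinom_ss (q : ℝ) (n k : ℕ) :
    qBinom q (n+1) (k+1) = qBinom q n k + q ^ (k+1) * qBinom q n (k+1) := rfl
lemma qNum_zero (q : ℝ) : qNum q 0 = 0 := by simp [qNum]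
lemma qNum_succ (q : ℝ) (n : ℕ) : qNum q (n+1) = 1 + q * qNum q n := by
  simp [qNum, Finset.sum_range_succ', Finset.mul_sum, pow_succ, mul_comm]
  ring
lemma qNum_add (q : ℝ) (a b : ℕ) : qNum q (a+b) = qNum q a + q^a * qNum q b := by
  simp [qNum, Finset.sum_range_add, pow_add, Finset.mul_sum]
lemma qBinom_eq_zero (q : ℝ) : ∀ n k, n < k → qBinom q n k = 0 := by
  intro n
  induction n with
  | zero => intro k hk; match k, hk with | (k+1), _ => rfl
  | succ n ih =>
    intro k hk
    match k, hk with
    | (k+1), hk =>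
      rw [qBinom_ss, ih k (by omega), ih (k+1) (by omega)]; ring
lemma qBinom_one (q : ℝ) (n : ℕ) : qBinom q n 1 = qNum q n := by
  induction n with
  | zero => simp [qNum_zero]; rfl
  | succ n ih => rw [qBinom_ss, qBinom_zero, ih, qNum_succ]; ring

lemma qNum_one (q : ℝ) : qNum q 1 = 1 := by rw [qNum_succ, qNum_zero]; ring

lemma qBinom_self (q : ℝ) (n : ℕ) : qBinom q n n = 1 := by
  induction n with
  | zero => rfl
  | succ n ih => rw [qBinom_ss, ih, qBinom_eq_zero q n (n+1) (by omega)]; ring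

lemma qBinom_pascal' (q : ℝ) : ∀ n k, qBinom q (n+1) (k+1) = q^(n-k) * qBinom q n k + qBinom q n (k+1) := by
  intro n
  induction n with
  | zero =>
    intro k
    match k with
    | 0 => rw [qBinom_ss]; norm_num [qBinom_zero, qBinom_eq_zero q 0 1 (by omega)]
    | (k+1) =>
      rw [qBinom_eq_zero q 1 (k+2) (by omega), qBinom_eq_zero q 0 (k+1) (by omega),
        qBinom_eq_zero q 0 (k+2) (by omega)]
      ring
  | succ n ih =>
    intro k
    match k with
    | 0 =>
      have F0 := qBinom_ss q (n+1) 0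
      have h1 := qNum_succ q (n+1)
      have h2 := qNum_add q (n+1) 1
      have h3 := qNum_one q
      norm_num at F0 ⊢
      rw [qBinom_zero, qBinom_one] at *
      linear_combination F0 + h2 - h1 + q^(n+1) * h3 + (q - 1) * (qBinom_one q (n+1))
    | (k+1) =>
      rcases le_or_gt (k+1) n with h | h
      · obtain ⟨d, rfl⟩ : ∃ d, n = k+1+d := ⟨n-(k+1), by omega⟩
        have F0 := qBinom_ss q (k+1+d+1) (k+1)
        have F1 := ih k
        have F2 := ih (k+1)
        have F3 := qBinom_ss q (k+1+d) k
        have F4 := qBinom_ss q (k+1+d) (k+1)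
        have e1 : k+1+d - k = d+1 := by omega
        have e2 : k+1+d - (k+1) = d := by omega
        have e3 : k+1+d+1 - (k+1) = d+1 := by omega
        rw [e1] at F1
        rw [e2] at F2
        rw [e3]
        linear_combination F0 + F1 + q^(k+2) * F2 - q^(d+1) * F3 - F4
      · rcases eq_or_lt_of_le (Nat.lt_succ_iff.mp h) with rfl | h2
        · simp [qBinom_self, qBinom_eq_zero q (n+1) (n+2) (by omega), Nat.sub_self]
        · rw [qBinom_eq_zero q (n+1) (k+2) (by omega), qBinom_eq_zero q (n+1+1) (k+1+1) (by omega),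
            qBinom_eq_zero q (n+1) (k+1) (by omega)]
          ring

lemma qAbsorb (q : ℝ) (hq : q ≠ 0) : ∀ n ℓ, qNum q (n+1) * qBinom q n ℓ = qNum q (ℓ+1) * qBinom q (n+1) (ℓ+1) := by
  intro n
  induction n with
  | zero =>
    intro ℓ
    match ℓ with
    | 0 => rw [qBinom_ss]; norm_num [qBinom_zero, qBinom_eq_zero q 0 1 (by omega)]
    | (ℓ+1) =>
      rw [qBinom_eq_zero q 0 (ℓ+1) (by omega), qBinom_eq_zero q 1 (ℓ+2) (by omega)]
      ring
  | succ n ih =>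
    intro ℓ
    match ℓ with
    | 0 => rw [qBinom_zero, qBinom_one, qNum_one]; ring
    | (ℓ+1) =>
      rcases le_or_gt ℓ n with h | h
      · have hB : qNum q (n+1) * qBinom q n (ℓ+1) = qNum q (n-ℓ) * qBinom q (n+1) (ℓ+1) := by
          apply mul_left_cancel₀ (pow_ne_zero (ℓ+1) hq)
          have pasc := qBinom_ss q n ℓ
          have hA := ih ℓ
          have hadd : qNum q (n+1) = qNum q (ℓ+1) + q^(ℓ+1) * qNum q (n-ℓ) := by
            have := qNum_add q (ℓ+1) (n-ℓ)
            have e : ℓ + 1 + (n - ℓ) = n + 1 := by omega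
            rwa [e] at this
          linear_combination (-(qNum q (n+1))) * pasc + qBinom q (n+1) (ℓ+1) * hadd - hA
        have pasc2 := qBinom_ss q (n+1) (ℓ+1)
        have hA' := ih (ℓ+1)
        have hadd2 : qNum q (n+2) = qNum q (ℓ+2) + q^(ℓ+2) * qNum q (n-ℓ) := by
          have := qNum_add q (ℓ+2) (n-ℓ)
          have e : ℓ + 2 + (n - ℓ) = n + 2 := by omega
          rwa [e] at this
        linear_combination qBinom q (n+1) (ℓ+1) * hadd2 - qNum q (ℓ+2) * pasc2 - q^(ℓ+2) * hB + q^(ℓ+2) * hA'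
      · rw [qBinom_eq_zero q (n+1) (ℓ+1) (by omega), qBinom_eq_zero q (n+2) (ℓ+2) (by omega)]
        ring

lemma qNum_geom (q : ℝ) (n : ℕ) : (1 - q) * qNum q n = 1 - q^n := by
  have := geom_sum_mul q n
  rw [qNum]
  linear_combination -this

lemma qProdSub_split (q x : ℝ) (m : ℕ) : qProdSub q x (m+1) = (1 - x) * qProdSub q (q*x) m := by
  unfold qProdSub
  rw [Finset.prod_range_succ']
  rw [Finset.prod_congr rfl (fun i _ => (by ring : (1 - x * q^(i+1)) = (1 - (q*x) * q^i)))]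
  ring

lemma qProdSub_succ (q x : ℝ) (m : ℕ) : qProdSub q x (m+1) = qProdSub q x m * (1 - x * q^m) :=
  Finset.prod_range_succ _ _

lemma qDelta (q x : ℝ) (i m : ℕ) :
    (q*x)^i * qProdSub q (q*x) (m+1) - x^i * qProdSub q x (m+1)
      = (1 - q) * x^i * qProdSub q (q*x) m * (x * qNum q (i+m+1) - qNum q i) := by
  rw [qProdSub_succ, qProdSub_split]
  have h1 := qNum_geom q i
  have h2 := qNum_geom q (i+m+1)
  have e : q^(i+m+1) = q^i * q * q^m := by rw [pow_add, pow_add]; ring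
  rw [mul_pow]
  linear_combination x^i * qProdSub q (q*x) m * h1 - x^(i+1) * qProdSub q (q*x) m * h2
    + x^(i+1) * qProdSub q (q*x) m * e

/-- Telescoping key identity. -/
lemma qKey (q : ℝ) (hq : q ≠ 0) (x : ℝ) : ∀ ℓ m : ℕ,
    (∑ i ∈ Finset.range (ℓ+1), qBinom q (ℓ+m+1) i * (q*x) ^ i * qProdSub q (q*x) (ℓ+m+1-i))
    - (∑ i ∈ Finset.range (ℓ+1), qBinom q (ℓ+m+1) i * x ^ i * qProdSub q x (ℓ+m+1-i))
    = (1 - q) * qNum q (ℓ+m+1) * qBinom q (ℓ+m) ℓ * x^(ℓ+1) * qProdSub q (q*x) m := by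
  intro ℓ
  induction ℓ with
  | zero =>
    intro m
    simp only [Finset.sum_range_one, qBinom_zero, Nat.zero_add, Nat.sub_zero, pow_zero]
    have := qDelta q x 0 m
    simp only [pow_zero, qNum_zero] at this
    norm_num at this ⊢
    linear_combination this
  | succ ℓ ih =>
    intro m
    have hIH := ih (m+1)
    have eN : ℓ + (m+1) + 1 = ℓ + 1 + m + 1 := by omega
    have e5 : ℓ + (m+1) = ℓ + 1 + m := by omega
    simp only [eN, e5] at hIH
    rw [Finset.sum_range_succ (fun i => qBinom q (ℓ+1+m+1) i * (q*x)^i * qProdSub q (q*x) (ℓ+1+m+1-i)) (ℓ+1),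
      Finset.sum_range_succ (fun i => qBinom q (ℓ+1+m+1) i * x^i * qProdSub q x (ℓ+1+m+1-i)) (ℓ+1)]
    have hD := qDelta q x (ℓ+1) m
    have eI : ℓ + 1 + m + 1 - (ℓ + 1) = m + 1 := by omega
    rw [eI]
    have hP := qBinom_pascal' q (ℓ+m+1) ℓ
    have ehp : ℓ + m + 1 - ℓ = m + 1 := by omega
    rw [ehp] at hP
    have hA := qAbsorb q hq (ℓ+m+1) ℓ
    have eA : ℓ + m + 1 + 1 = ℓ + 1 + m + 1 := by omega
    have e6 : ℓ + m + 1 = ℓ + 1 + m := by omega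
    rw [eA, e6] at hA
    rw [eA, e6] at hP
    have hS := qProdSub_succ q (q*x) m
    linear_combination hIH + qBinom q (ℓ+1+m+1) (ℓ+1) * hD
      + (1-q) * qNum q (ℓ+1+m+1) * qBinom q (ℓ+1+m) ℓ * x^(ℓ+1) * hS
      + (1-q) * x^(ℓ+1) * qProdSub q (q*x) m * hA
      + (1-q) * qNum q (ℓ+1+m+1) * x^(ℓ+2) * qProdSub q (q*x) m * hP

/-- the partial-sum function -/
noncomputable def Sfun (q : ℝ) (ℓ m : ℕ) : ℝ → ℝ := fun x =>
  ∑ i ∈ Finset.range (ℓ+1), qBinom q (ℓ+m+1) i * x^i * qProdSub q x (ℓ+m+1-i)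

lemma Sfun_cont (q : ℝ) (ℓ m : ℕ) : Continuous (Sfun q ℓ m) := by
  unfold Sfun qProdSub
  fun_prop

lemma Sfun_zero (q : ℝ) (ℓ m : ℕ) : Sfun q ℓ m 0 = 1 := by
  unfold Sfun
  rw [Finset.sum_eq_single 0]
  · simp [qProdSub, qBinom_zero]
  · intro i _ hi
    rw [zero_pow hi]; ring
  · intro h; simp at h

lemma Sfun_step (q : ℝ) (hq : q ≠ 0) (p : ℝ) (ℓ m : ℕ) (j : ℕ) :
    (1-q) * qNum q (ℓ+m+1) * qBinom q (ℓ+m) ℓ * p *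
        (q^j * ((p*q^j)^ℓ * qProdSub q (q*(p*q^j)) m))
      = Sfun q ℓ m (p*q^(j+1)) - Sfun q ℓ m (p*q^j) := by
  have k := qKey q hq (p*q^j) ℓ m
  rw [show p*q^(j+1) = q*(p*q^j) by ring]
  unfold Sfun
  linear_combination -k

lemma main_aux (q p : ℝ) (hq0 : 0 < q) (hq1 : q < 1) (hp0 : 0 ≤ p) (hp1 : p ≤ 1) (ℓ m : ℕ) :
    ∑ i ∈ Finset.range (ℓ+1), qBinom q (ℓ+m+1) i * p^i * qProdSub q p (ℓ+m+1-i)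
    = 1 - qNum q (ℓ+m+1) * qBinom q (ℓ+m) ℓ *
        ((1-q) * p * ∑' j : ℕ, q^j * ((p*q^j)^ℓ * qProdSub q (q*(p*q^j)) m)) := by
  have hqne : q ≠ 0 := ne_of_gt hq0
  have hq01 : (0:ℝ) ≤ 1 := zero_le_one
  have hfac : ∀ j k : ℕ, 0 ≤ q*(p*q^j)*q^k ∧ q*(p*q^j)*q^k ≤ 1 := by
    intro j k
    have h0 : 0 ≤ p * q^j := mul_nonneg hp0 (pow_nonneg hq0.le j)
    have h1 : p * q^j ≤ 1 := by
      calc p*q^j ≤ 1*1 := mul_le_mul hp1 (pow_le_one₀ hq0.le hq1.le) (pow_nonneg hq0.le j) zero_le_one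
        _ = 1 := by ring
    have h2 : 0 ≤ q * (p*q^j) := mul_nonneg hq0.le h0
    have h3 : q * (p*q^j) ≤ 1 := by
      calc q*(p*q^j) ≤ 1*1 := mul_le_mul hq1.le h1 h0 zero_le_one
        _ = 1 := by ring
    refine ⟨mul_nonneg h2 (pow_nonneg hq0.le k), ?_⟩
    calc q*(p*q^j)*q^k ≤ 1*1 := mul_le_mul h3 (pow_le_one₀ hq0.le hq1.le) (pow_nonneg hq0.le k) zero_le_one
      _ = 1 := by ring
  set t : ℕ → ℝ := fun j => q^j * ((p*q^j)^ℓ * qProdSub q (q*(p*q^j)) m) with ht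
  set c : ℝ := (1-q) * qNum q (ℓ+m+1) * qBinom q (ℓ+m) ℓ * p with hc
  -- summability
  have hnn : ∀ j, 0 ≤ t j := by
    intro j
    apply mul_nonneg (pow_nonneg hq0.le j)
    apply mul_nonneg (pow_nonneg (mul_nonneg hp0 (pow_nonneg hq0.le j)) ℓ)
    unfold qProdSub
    apply Finset.prod_nonneg
    intro k _
    linarith [(hfac j k).2]
  have hle : ∀ j, t j ≤ q^j := by
    intro j
    have h2 : (p*q^j)^ℓ ≤ 1 := by
      apply pow_le_one₀ (mul_nonneg hp0 (pow_nonneg hq0.le j))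
      calc p*q^j ≤ 1*1 := mul_le_mul hp1 (pow_le_one₀ hq0.le hq1.le) (pow_nonneg hq0.le j) zero_le_one
        _ = 1 := by ring
    have h3 : qProdSub q (q*(p*q^j)) m ≤ 1 := by
      unfold qProdSub
      apply Finset.prod_le_one
      · intro k _
        linarith [(hfac j k).2]
      · intro k _
        linarith [(hfac j k).1]
    have h4 : 0 ≤ qProdSub q (q*(p*q^j)) m := by
      unfold qProdSub
      apply Finset.prod_nonneg
      intro k _
      linarith [(hfac j k).2]
    calc t j ≤ q^j * 1 := by
          rw [ht]
          apply mul_le_mul_of_nonneg_left _ (pow_nonneg hq0.le j)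
          calc (p*q^j)^ℓ * qProdSub q (q*(p*q^j)) m ≤ 1 * 1 := by
                apply mul_le_mul h2 h3 h4 (by norm_num)
            _ = 1 := by ring
      _ = q^j := by ring
  have hsum : Summable t :=
    Summable.of_nonneg_of_le hnn hle (summable_geometric_of_lt_one hq0.le hq1)
  -- partial sums telescope
  have hps : ∀ J : ℕ, c * ∑ j ∈ Finset.range J, t j = Sfun q ℓ m (p*q^J) - Sfun q ℓ m p := by
    intro J
    rw [Finset.mul_sum]
    rw [Finset.sum_congr rfl (fun j _ => Sfun_step q hqne p ℓ m j)]
    rw [Finset.sum_range_sub (fun j => Sfun q ℓ m (p*q^j)) J]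
    norm_num
  -- limits
  have h1 : Filter.Tendsto (fun J : ℕ => p * q^J) Filter.atTop (nhds 0) := by
    have := (tendsto_pow_atTop_nhds_zero_of_lt_one hq0.le hq1).const_mul p
    simpa using this
  have h2 : Filter.Tendsto (fun J : ℕ => Sfun q ℓ m (p*q^J)) Filter.atTop (nhds 1) := by
    have := ((Sfun_cont q ℓ m).tendsto 0).comp h1
    rwa [Sfun_zero] at this
  have h3 : Filter.Tendsto (fun J : ℕ => c * ∑ j ∈ Finset.range J, t j) Filter.atTop
      (nhds (c * ∑' j, t j)) := hsum.hasSum.tendsto_sum_nat.const_mul c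
  have h4 : Filter.Tendsto (fun J : ℕ => c * ∑ j ∈ Finset.range J, t j) Filter.atTop
      (nhds (1 - Sfun q ℓ m p)) := by
    simp only [hps]
    exact h2.sub_const _
  have hkey : c * ∑' j, t j = 1 - Sfun q ℓ m p := tendsto_nhds_unique h3 h4
  have hgoal : Sfun q ℓ m p = 1 - qNum q (ℓ+m+1) * qBinom q (ℓ+m) ℓ * ((1-q) * p * ∑' j, t j) := by
    rw [hc] at hkey
    linarith [hkey]
  exact hgoal


/-- Formula (2.42): for `0 ≤ ℓ < n`,
`∑_{i=0}^ℓ [n choose i] p^i (1−·p)^{n-i}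
  = 1 - [n] [n-1 choose ℓ] ∫_0^p x^ℓ (1−·qx)^{n-1-ℓ} d_q x`,
where the Jackson q-integral is `∫_0^p f d_q x = (1-q) p ∑_{j=0}^∞ q^j f(p q^j)`. -/
theorem qBernoulli_tail_jackson (q p : ℝ) (hq0 : 0 < q) (hq1 : q < 1)
    (hp0 : 0 ≤ p) (hp1 : p ≤ 1) (n ℓ : ℕ) (hℓ : ℓ < n) :
    ∑ i ∈ Finset.range (ℓ + 1), qBinom q n i * p ^ i * qProdSub q p (n - i) =
      1 - qNum q n * qBinom q (n - 1) ℓ *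
        ((1 - q) * p * ∑' j : ℕ, q ^ j *
          ((p * q ^ j) ^ ℓ * qProdSub q (q * (p * q ^ j)) (n - 1 - ℓ))) := by
  obtain ⟨m, rfl⟩ : ∃ m, n = ℓ + m + 1 := ⟨n - ℓ - 1, by omega⟩
  rw [show ℓ + m + 1 - 1 - ℓ = m from by omega, show ℓ + m + 1 - 1 = ℓ + m from by omega]
  exact main_aux q p hq0 hq1 hp0 hp1 ℓ m
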